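/- For 2×2 matrices k₁, k₂, k₃, k₄ with kᵢ = vᵢwᵢᵀ for vectors vᵢ, wᵢ ∈ ℂ² and v₁w₁ᵀ + v₂w₂ᵀ + v₃w₃ᵀ + v₄w₄ᵀ = 0, the identity ε₁₂ε₃₄ · det(k₁+k₃) = ε₃₁ε₂₄ · det(k₁+k₂) holds, where εᵢⱼ = wᵢᵀ ε wⱼ and ε = [[0,1],[-1,0]]. -/
import Mathlib


open Matrix

/-- The standard antisymmetric 2×2 matrix `ε = [[0,1],[-1,0]]`. -/
noncomputable def epsMat : Matrix (Fin 2) (Fin 2) ℂ := !![0, 1; -1, 0]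

/-- `εᵢⱼ = wᵢᵀ ε wⱼ`. -/
noncomputable def epsPair (wi wj : Fin 2 → ℂ) : ℂ := wi ⬝ᵥ epsMat.mulVec wj

/-- for `kᵢ = vᵢwᵢᵀ` (outer products) with
`k₁ + k₂ + k₃ + k₄ = 0`, one has
`ε₁₂ ε₃₄ · det(k₁ + k₃) = ε₃₁ ε₂₄ · det(k₁ + k₂)`.
(Indices are 0-based: `1,2,3,4 ↦ 0,1,2,3`.) -/
theorem stmt_16 (v w : Fin 4 → Fin 2 → ℂ)
    (hsum : ∑ i : Fin 4, vecMulVec (v i) (w i) = 0) :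
    epsPair (w 0) (w 1) * epsPair (w 2) (w 3) *
        (vecMulVec (v 0) (w 0) + vecMulVec (v 2) (w 2)).det =
      epsPair (w 2) (w 0) * epsPair (w 1) (w 3) *
        (vecMulVec (v 0) (w 0) + vecMulVec (v 1) (w 1)).det := by
  have E : ∀ r s : Fin 2,
      v 0 r * w 0 s + v 1 r * w 1 s + v 2 r * w 2 s + v 3 r * w 3 s = 0 := by
    intro r s
    have := congrFun (congrFun hsum r) s
    simpa [Fin.sum_univ_four, vecMulVec, Matrix.sum_apply] using this
  simp only [epsPair, epsMat, vecMulVec, Matrix.det_fin_two, Matrix.add_apply,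
    Matrix.of_apply, Matrix.mulVec, dotProduct, Fin.sum_univ_two,
    Matrix.cons_val', Matrix.cons_val_zero, Matrix.cons_val_one, Matrix.head_cons,
    Matrix.empty_val', Matrix.cons_val_fin_one, Matrix.head_fin_const]
  linear_combination
    (w 0 0 * w 1 1 - w 0 1 * w 1 0) * (w 0 0 * w 2 1 - w 0 1 * w 2 0) *
      (v 0 0 * (w 3 1 * E 1 0 - w 3 0 * E 1 1)
        - v 0 1 * (w 3 1 * E 0 0 - w 3 0 * E 0 1))
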